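/- arXiv:1704.03645 — 3 statements merged into one kernel-verified Lean document; each statement's English description precedes it below -/
import Mathlib

section
/- Let E and F be complex Hilbert spaces, let L be a linear map from a subspace dom(L) ⊆ E into F, and let L^g be a linear map from a subspace dom(L^g) ⊆ F into E such that: (i) range(L) ⊆ dom(L^g); (ii) range(L^g) ⊆ dom(L); (iii) for every x ∈ dom(L), L^g(L x) equals the orthogonal projection of x onto the topological closure of range(L^g); (iv) for every y ∈ dom(L^g), L(L^g y) equals the orthogonal projection of y onto the topological closure of range(L). Then null(L) = dom(L) ∩ (range(L^g))^⊥ and dom(L) ∩ (null(L))^⊥ = range(L^g). -/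
/-!
Write `N = null L ⊆ E` and `R = range Lg`, and let `P` be the orthogonal projection onto the
closure of `R`, so that `Lg ∘ L = P` on `dom L`. If `L x = 0` then `P x = 0`, i.e. `x ⊥ R`;
conversely, if `x ⊥ R` then `Lg (L x) = 0`, so `L x`, being fixed by the projection onto the
closure of `range L`, equals `L (Lg (L x)) = 0`. Hence `N = dom L ∩ Rᗮ`. For the second identity,
`R ⊆ Nᗮ` follows from `N ⊥ R`, and for `x ∈ dom L ∩ Nᗮ` the vector `x - Lg (L x)` lies in
`dom L ∩ Rᗮ = N` and in `Nᗮ`, hence vanishes, so `x = Lg (L x) ∈ R`.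
-/

open Submodule LinearMap

namespace TsengInverse

variable {𝕜 E F : Type*} [RCLike 𝕜]
  [NormedAddCommGroup E] [InnerProductSpace 𝕜 E] [NormedAddCommGroup F] [InnerProductSpace 𝕜 F]
  {domL : Submodule 𝕜 E} {domLg : Submodule 𝕜 F} {L : domL →ₗ[𝕜] F} {Lg : domLg →ₗ[𝕜] E}

theorem map_ker_le_orthogonal_range [(range Lg).topologicalClosure.HasOrthogonalProjection]
    (h1 : range L ≤ domLg)
    (h3 : ∀ x : domL, Lg ⟨L x, h1 ⟨x, rfl⟩⟩ = (range Lg).topologicalClosure.starProjection x) :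
    (ker L).map domL.subtype ≤ (range Lg)ᗮ := by
  rintro _ ⟨x, hx, rfl⟩
  have hLx : (⟨L x, h1 ⟨x, rfl⟩⟩ : domLg) = 0 := Subtype.ext (mem_ker.mp hx)
  rw [subtype_apply, ← orthogonal_closure, ← starProjection_apply_eq_zero_iff, ← h3, hLx, map_zero]

theorem sub_mem_inf_orthogonal_range [(range Lg).topologicalClosure.HasOrthogonalProjection]
    (h1 : range L ≤ domLg) (h2 : range Lg ≤ domL)
    (h3 : ∀ x : domL, Lg ⟨L x, h1 ⟨x, rfl⟩⟩ = (range Lg).topologicalClosure.starProjection x)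
    (x : domL) : (x : E) - Lg ⟨L x, h1 ⟨x, rfl⟩⟩ ∈ domL ⊓ (range Lg)ᗮ :=
  ⟨sub_mem x.2 (h2 ⟨_, rfl⟩), by
    rw [h3, ← orthogonal_closure]
    exact sub_starProjection_mem_orthogonal _⟩

theorem inf_orthogonal_range_le_map_ker
    [(range Lg).topologicalClosure.HasOrthogonalProjection]
    [(range L).topologicalClosure.HasOrthogonalProjection]
    (h1 : range L ≤ domLg) (h2 : range Lg ≤ domL)
    (h3 : ∀ x : domL, Lg ⟨L x, h1 ⟨x, rfl⟩⟩ = (range Lg).topologicalClosure.starProjection x)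
    (h4 : ∀ y : domLg, L ⟨Lg y, h2 ⟨y, rfl⟩⟩ = (range L).topologicalClosure.starProjection y) :
    domL ⊓ (range Lg)ᗮ ≤ (ker L).map domL.subtype := by
  rintro x ⟨hxL, hx⟩
  set y : domLg := ⟨L ⟨x, hxL⟩, h1 (mem_range_self L _)⟩
  have hLgy : (⟨Lg y, h2 (mem_range_self Lg y)⟩ : domL) = 0 :=
    Subtype.ext <| (h3 ⟨x, hxL⟩).trans <|
      (starProjection_apply_eq_zero_iff _).mpr (by rwa [orthogonal_closure])
  refine ⟨⟨x, hxL⟩, ?_, rfl⟩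
  calc L ⟨x, hxL⟩ = (range L).topologicalClosure.starProjection y :=
        (starProjection_eq_self_iff.mpr (le_topologicalClosure _ (mem_range_self L _))).symm
    _ = L ⟨Lg y, h2 (mem_range_self Lg y)⟩ := (h4 y).symm
    _ = 0 := by rw [hLgy, map_zero]

theorem map_ker_eq_inf_orthogonal_range
    [(range Lg).topologicalClosure.HasOrthogonalProjection]
    [(range L).topologicalClosure.HasOrthogonalProjection]
    (h1 : range L ≤ domLg) (h2 : range Lg ≤ domL)
    (h3 : ∀ x : domL, Lg ⟨L x, h1 ⟨x, rfl⟩⟩ = (range Lg).topologicalClosure.starProjection x)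
    (h4 : ∀ y : domLg, L ⟨Lg y, h2 ⟨y, rfl⟩⟩ = (range L).topologicalClosure.starProjection y) :
    (ker L).map domL.subtype = domL ⊓ (range Lg)ᗮ :=
  le_antisymm (le_inf (map_subtype_le _ _) (map_ker_le_orthogonal_range h1 h3))
    (inf_orthogonal_range_le_map_ker h1 h2 h3 h4)

theorem inf_orthogonal_map_ker_eq_range
    [(range Lg).topologicalClosure.HasOrthogonalProjection]
    [(range L).topologicalClosure.HasOrthogonalProjection]
    (h1 : range L ≤ domLg) (h2 : range Lg ≤ domL)
    (h3 : ∀ x : domL, Lg ⟨L x, h1 ⟨x, rfl⟩⟩ = (range Lg).topologicalClosure.starProjection x)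
    (h4 : ∀ y : domLg, L ⟨Lg y, h2 ⟨y, rfl⟩⟩ = (range L).topologicalClosure.starProjection y) :
    domL ⊓ ((ker L).map domL.subtype)ᗮ = range Lg := by
  set N := (ker L).map domL.subtype
  have hRN : range Lg ≤ Nᗮ :=
    (range Lg).le_orthogonal_orthogonal.trans (orthogonal_le (map_ker_le_orthogonal_range h1 h3))
  refine le_antisymm ?_ (le_inf h2 hRN)
  rintro x ⟨hxL, hxN⟩
  have hp : Lg ⟨L ⟨x, hxL⟩, h1 ⟨⟨x, hxL⟩, rfl⟩⟩ ∈ range Lg := ⟨_, rfl⟩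
  have hxp : x - Lg ⟨L ⟨x, hxL⟩, h1 ⟨⟨x, hxL⟩, rfl⟩⟩ ∈ N ⊓ Nᗮ :=
    ⟨(map_ker_eq_inf_orthogonal_range h1 h2 h3 h4).ge
      (sub_mem_inf_orthogonal_range h1 h2 h3 ⟨x, hxL⟩), sub_mem hxN (hRN hp)⟩
  rw [inf_orthogonal_eq_bot, mem_bot, sub_eq_zero] at hxp
  exact hxp ▸ hp

end TsengInverse

/-- **Tseng generalized inverse** (Ben-Israel–Greville, Ch. 9, Lemma 3).
If `Lg` is a Tseng generalized inverse of `L`, then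
`null(L) = dom(L) ∩ (range Lg)ᗮ` and `dom(L) ∩ (null L)ᗮ = range Lg`. -/
theorem tseng_generalized_inverse_null_car
    {E F : Type*} [NormedAddCommGroup E] [InnerProductSpace ℂ E] [CompleteSpace E]
    [NormedAddCommGroup F] [InnerProductSpace ℂ F] [CompleteSpace F]
    (domL : Submodule ℂ E) (domLg : Submodule ℂ F)
    (L : domL →ₗ[ℂ] F) (Lg : domLg →ₗ[ℂ] E)
    (h1 : LinearMap.range L ≤ domLg)
    (h2 : LinearMap.range Lg ≤ domL)
    (h3 : ∀ x : domL, Lg ⟨L x, h1 ⟨x, rfl⟩⟩ =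
      (Submodule.orthogonalProjectionOnto (LinearMap.range Lg).topologicalClosure (x : E) : E))
    (h4 : ∀ y : domLg, L ⟨Lg y, h2 ⟨y, rfl⟩⟩ =
      (Submodule.orthogonalProjectionOnto (LinearMap.range L).topologicalClosure (y : F) : F)) :
    (LinearMap.ker L).map domL.subtype = domL ⊓ (LinearMap.range Lg)ᗮ ∧
    domL ⊓ ((LinearMap.ker L).map domL.subtype)ᗮ = LinearMap.range Lg := by
  simp only [← starProjection_apply] at h3 h4
  exact ⟨TsengInverse.map_ker_eq_inf_orthogonal_range h1 h2 h3 h4,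
    TsengInverse.inf_orthogonal_map_ker_eq_range h1 h2 h3 h4⟩
end

section
/- Let H₀ be a nonzero real number and let u : ℝ × ℝ → ℝ be continuous, 2π-periodic in the second variable, with continuous time derivative ∂ₜu, satisfying for all t, x the integral form of the sine-Gordon equation: ∂ₜu(t,x) = 𝒟(sin∘u(t,·))(x) − C̃(u(t,·))/H₀. If ∫₀^{2π} sin(u(0,x)) dx = 0 and ∫₀^{2π} cos(u(0,x)) dx = H₀, then for every t, ∫₀^{2π} sin(u(t,x)) dx = 0 and ∫₀^{2π} cos(u(t,x)) dx = H₀. -/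
open Real intervalIntegral

/-- The mean value `f̄ = (1/(2π)) ∫₀^{2π} f(y) dy` of a `2π`-periodic function. -/
noncomputable def fmean (f : ℝ → ℝ) : ℝ := (1 / (2 * π)) * ∫ y in (0:ℝ)..(2 * π), f y

/-- The antiderivative operator `𝒟`, the realization on continuous functions of the
maximal Tseng generalized inverse `∂ₓ†` of the spatial derivative on `𝕊 = ℝ/2πℤ`. -/
noncomputable def Dop (f : ℝ → ℝ) (x : ℝ) : ℝ :=
  (∫ y in (0:ℝ)..x, (f y - fmean f)) -
    (1 / (2 * π)) * ∫ z in (0:ℝ)..(2 * π), (∫ y in (0:ℝ)..z, (f y - fmean f))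

/-- `C̃(v) = ∫₀^{2π} cos(v(x)) ⬝ 𝒟(sin∘v)(x) dx`. -/
noncomputable def Ctilde (v : ℝ → ℝ) : ℝ :=
  ∫ x in (0:ℝ)..(2 * π), Real.cos (v x) * Dop (fun y => Real.sin (v y)) x

/-!
With `F = ∫ sin u`, `H = ∫ cos u` and `k = C̃(u)/H₀`, the equation gives
`F' = ∫ cos u · ∂ₜu = C̃(u) - kH = -k (H - H₀)` and `H' = -∫ sin u · ∂ₜu = kF`, because
`∫ g · 𝒟g = 0`: `𝒟g` is a periodic primitive of `g - ḡ` with mean zero. So `(F, H - H₀)` rotates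
with angular speed `k`, and `F² + (H - H₀)²`, which vanishes at `t = 0`, vanishes for all `t`.
-/

open MeasureTheory Set

lemma integral_sub_fmean {f : ℝ → ℝ} (hf : IntervalIntegrable f volume 0 (2 * π)) :
    ∫ y in (0:ℝ)..(2 * π), (f y - fmean f) = 0 := by
  rw [integral_sub hf intervalIntegrable_const, intervalIntegral.integral_const, smul_eq_mul,
    fmean]
  field_simp
  ring

section Dop

variable {f : ℝ → ℝ}

lemma hasDerivAt_Dop (hf : Continuous f) (x : ℝ) : HasDerivAt (Dop f) (f x - fmean f) x :=
  (integral_hasDerivAt_right ((hf.sub continuous_const).intervalIntegrable 0 x)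
    ((hf.sub continuous_const).stronglyMeasurableAtFilter _ _)
    (hf.sub continuous_const).continuousAt).sub_const _

lemma continuous_Dop (hf : Continuous f) : Continuous (Dop f) :=
  continuous_iff_continuousAt.2 fun x => (hasDerivAt_Dop hf x).continuousAt

lemma Dop_two_pi_eq_Dop_zero (hf : IntervalIntegrable f volume 0 (2 * π)) :
    Dop f (2 * π) = Dop f 0 := by
  rw [Dop, Dop, integral_sub_fmean hf, integral_same]

lemma integral_Dop (hf : Continuous f) : ∫ x in (0:ℝ)..(2 * π), Dop f x = 0 := by
  have hP : Continuous fun z => ∫ y in (0:ℝ)..z, (f y - fmean f) :=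
    continuous_primitive (fun a b => (hf.sub continuous_const).intervalIntegrable a b) 0
  unfold Dop
  rw [integral_sub (hP.intervalIntegrable _ _) intervalIntegrable_const,
    intervalIntegral.integral_const, smul_eq_mul]
  field_simp
  ring

theorem integral_mul_Dop_self (hf : Continuous f) :
    ∫ x in (0:ℝ)..(2 * π), f x * Dop f x = 0 := by
  have hsq : ∫ x in (0:ℝ)..(2 * π), (f x - fmean f) * Dop f x = 0 := by
    have hderiv : ∀ x ∈ uIcc (0:ℝ) (2 * π),
        HasDerivAt (fun x => Dop f x ^ 2 / 2) ((f x - fmean f) * Dop f x) x := fun x _ =>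
      (((hasDerivAt_Dop hf x).fun_pow 2).div_const 2).congr_deriv (by push_cast; ring)
    rw [integral_eq_sub_of_hasDerivAt hderiv
      (((hf.sub continuous_const).mul (continuous_Dop hf)).intervalIntegrable _ _),
      Dop_two_pi_eq_Dop_zero (hf.intervalIntegrable _ _), sub_self]
  have hsplit : (fun x => f x * Dop f x) =
      fun x => (f x - fmean f) * Dop f x + fmean f * Dop f x := by
    ext x; ring
  have hD := continuous_Dop hf
  rw [hsplit, integral_add (Continuous.intervalIntegrable (by fun_prop) _ _)
    (Continuous.intervalIntegrable (by fun_prop) _ _), intervalIntegral.integral_const_mul,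
    hsq, integral_Dop hf, mul_zero, add_zero]

end Dop

theorem hasDerivAt_intervalIntegral_of_continuous {f f' : ℝ → ℝ → ℝ} {a b : ℝ}
    (hf : Continuous (Function.uncurry f)) (hf' : Continuous (Function.uncurry f'))
    (hd : ∀ s x, HasDerivAt (fun s => f s x) (f' s x) s) (t : ℝ) :
    HasDerivAt (fun s => ∫ x in a..b, f s x) (∫ x in a..b, f' t x) t := by
  obtain ⟨M, hM⟩ : ∃ M, ∀ p ∈ Metric.closedBall t 1 ×ˢ uIcc a b, ‖Function.uncurry f' p‖ ≤ M :=
    ((isCompact_closedBall t 1).prod isCompact_uIcc).exists_bound_of_continuousOn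
      hf'.continuousOn
  exact (hasDerivAt_integral_of_dominated_loc_of_deriv_le (Metric.ball_mem_nhds t one_pos)
    (Filter.Eventually.of_forall fun s => (hf.uncurry_left s).aestronglyMeasurable)
    ((hf.uncurry_left t).intervalIntegrable _ _)
    (hf'.uncurry_left t).aestronglyMeasurable
    (Filter.Eventually.of_forall fun x hx s hs =>
      hM (s, x) ⟨Metric.ball_subset_closedBall hs, uIoc_subset_uIcc hx⟩)
    (intervalIntegrable_const (c := M))
    (Filter.Eventually.of_forall fun x _ s _ => hd s x)).2

theorem eq_zero_of_hasDerivAt_rotation {F G k : ℝ → ℝ}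
    (hF : ∀ t, HasDerivAt F (-(k t * G t)) t) (hG : ∀ t, HasDerivAt G (k t * F t) t)
    {s : ℝ} (hF₀ : F s = 0) (hG₀ : G s = 0) (t : ℝ) : F t = 0 ∧ G t = 0 := by
  have hE : ∀ t, HasDerivAt (fun t => F t ^ 2 + G t ^ 2) 0 t := fun t =>
    (((hF t).fun_pow 2).add ((hG t).fun_pow 2)).congr_deriv (by push_cast; ring)
  have hconst : F t ^ 2 + G t ^ 2 = F s ^ 2 + G s ^ 2 :=
    is_const_of_deriv_eq_zero (fun t => (hE t).differentiableAt) (fun t => (hE t).deriv) t s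
  rw [hF₀, hG₀] at hconst
  constructor <;> nlinarith [sq_nonneg (F t), sq_nonneg (G t)]

lemma integral_cos_mul_Dop_sin_sub {v : ℝ → ℝ} (hv : Continuous v) (c : ℝ) :
    ∫ x in (0:ℝ)..(2 * π), cos (v x) * (Dop (fun y => sin (v y)) x - c) =
      Ctilde v - c * ∫ x in (0:ℝ)..(2 * π), cos (v x) := by
  have hD := continuous_Dop (f := fun y => sin (v y)) (by fun_prop)
  simp_rw [mul_sub]
  rw [integral_sub (Continuous.intervalIntegrable (by fun_prop) _ _)
    (Continuous.intervalIntegrable (by fun_prop) _ _), intervalIntegral.integral_mul_const,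
    ← Ctilde, mul_comm]

lemma integral_sin_mul_Dop_sin_sub {v : ℝ → ℝ} (hv : Continuous v) (c : ℝ) :
    ∫ x in (0:ℝ)..(2 * π), sin (v x) * (Dop (fun y => sin (v y)) x - c) =
      -(c * ∫ x in (0:ℝ)..(2 * π), sin (v x)) := by
  have hD := continuous_Dop (f := fun y => sin (v y)) (by fun_prop)
  simp_rw [mul_sub]
  rw [integral_sub (Continuous.intervalIntegrable (by fun_prop) _ _)
    (Continuous.intervalIntegrable (by fun_prop) _ _), intervalIntegral.integral_mul_const,
    integral_mul_Dop_self (f := fun y => sin (v y)) (by fun_prop)]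
  ring

section SineGordon

variable {H₀ : ℝ} {u ut : ℝ → ℝ → ℝ}

lemma hasDerivAt_integral_sin_sineGordon (hu : Continuous (Function.uncurry u))
    (hut : Continuous (Function.uncurry ut))
    (hderiv : ∀ t x : ℝ, HasDerivAt (fun s => u s x) (ut t x) t)
    (heq : ∀ t x : ℝ, ut t x = Dop (fun y => sin (u t y)) x - Ctilde (u t) / H₀)
    (hH₀ : H₀ ≠ 0) (t : ℝ) :
    HasDerivAt (fun s => ∫ x in (0:ℝ)..(2 * π), sin (u s x))
      (-(Ctilde (u t) / H₀ * ((∫ x in (0:ℝ)..(2 * π), cos (u t x)) - H₀))) t := by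
  have h := hasDerivAt_intervalIntegral_of_continuous (a := 0) (b := 2 * π)
    (f' := fun s x => cos (u s x) * ut s x) (by fun_prop) (by fun_prop)
    (fun s x => (hderiv s x).sin) t
  simp_rw [heq t] at h
  rw [integral_cos_mul_Dop_sin_sub (hu.uncurry_left t)] at h
  exact h.congr_deriv (by field_simp; ring)

lemma hasDerivAt_integral_cos_sineGordon (hu : Continuous (Function.uncurry u))
    (hut : Continuous (Function.uncurry ut))
    (hderiv : ∀ t x : ℝ, HasDerivAt (fun s => u s x) (ut t x) t)
    (heq : ∀ t x : ℝ, ut t x = Dop (fun y => sin (u t y)) x - Ctilde (u t) / H₀)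
    (t : ℝ) :
    HasDerivAt (fun s => ∫ x in (0:ℝ)..(2 * π), cos (u s x))
      (Ctilde (u t) / H₀ * ∫ x in (0:ℝ)..(2 * π), sin (u t x)) t := by
  have h := hasDerivAt_intervalIntegral_of_continuous (a := 0) (b := 2 * π)
    (f' := fun s x => -(sin (u s x) * ut s x)) (by fun_prop) (by fun_prop)
    (fun s x => (hderiv s x).cos.congr_deriv (neg_mul _ _)) t
  simp_rw [heq t] at h
  rwa [intervalIntegral.integral_neg, integral_sin_mul_Dop_sin_sub (hu.uncurry_left t),
    neg_neg] at h

end SineGordon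

theorem sineGordon_integral_form_conservation_general (H₀ : ℝ) (hH₀ : H₀ ≠ 0)
    (u ut : ℝ → ℝ → ℝ)
    (hu : Continuous (Function.uncurry u))
    (hut : Continuous (Function.uncurry ut))
    (hderiv : ∀ t x : ℝ, HasDerivAt (fun s => u s x) (ut t x) t)
    (heq : ∀ t x : ℝ, ut t x = Dop (fun y => Real.sin (u t y)) x - Ctilde (u t) / H₀)
    (hF0 : (∫ x in (0:ℝ)..(2 * π), Real.sin (u 0 x)) = 0)
    (hH0 : (∫ x in (0:ℝ)..(2 * π), Real.cos (u 0 x)) = H₀) :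
    ∀ t : ℝ, (∫ x in (0:ℝ)..(2 * π), Real.sin (u t x)) = 0 ∧
      (∫ x in (0:ℝ)..(2 * π), Real.cos (u t x)) = H₀ := by
  intro t
  obtain ⟨hF, hH⟩ := eq_zero_of_hasDerivAt_rotation (k := fun t => Ctilde (u t) / H₀)
    (hasDerivAt_integral_sin_sineGordon hu hut hderiv heq hH₀)
    (fun t => (hasDerivAt_integral_cos_sineGordon hu hut hderiv heq t).sub_const H₀)
    hF0 (sub_eq_zero.2 hH0) t
  exact ⟨hF, sub_eq_zero.1 hH⟩

/-- Conservation laws for the integral form of the sine-Gordon equation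
`∂ₜu = 𝒟(sin∘u(t,·)) − C̃(u(t,·))/H₀`: if `ℱ(u(0,·)) = 0` and `ℋ(u(0,·)) = H₀`, then
`ℱ(u(t,·)) = 0` and `ℋ(u(t,·)) = H₀` for all `t`. -/
theorem sineGordon_integral_form_conservation (H₀ : ℝ) (hH₀ : H₀ ≠ 0)
    (u ut : ℝ → ℝ → ℝ)
    (hu : Continuous (Function.uncurry u))
    (hper : ∀ t x : ℝ, u t (x + 2 * π) = u t x)
    (hut : Continuous (Function.uncurry ut))
    (hderiv : ∀ t x : ℝ, HasDerivAt (fun s => u s x) (ut t x) t)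
    (heq : ∀ t x : ℝ, ut t x = Dop (fun y => Real.sin (u t y)) x - Ctilde (u t) / H₀)
    (hF0 : (∫ x in (0:ℝ)..(2 * π), Real.sin (u 0 x)) = 0)
    (hH0 : (∫ x in (0:ℝ)..(2 * π), Real.cos (u 0 x)) = H₀) :
    ∀ t : ℝ, (∫ x in (0:ℝ)..(2 * π), Real.sin (u t x)) = 0 ∧
      (∫ x in (0:ℝ)..(2 * π), Real.cos (u t x)) = H₀ :=
  sineGordon_integral_form_conservation_general H₀ hH₀ u ut hu hut hderiv heq hF0 hH0
end

section
/- Let u : ℝ × ℝ → ℝ be twice continuously differentiable, 2π-periodic in the second variable, and satisfy the modified short pulse equation ∂ₓ(∂ₜu)(t,x) = u(t,x) + (1/2)·u(t,x)·∂ₓ²(u²)(t,x) for all t, x. Then the function t ↦ ∫₀^{2π} (∂ₓu(t,x))² dx is constant. Consequently, if ∫₀^{2π} (∂ₓu(0,x))² dx ≠ 2π, then 2π − ∫₀^{2π} (∂ₓu(t,x))² dx ≠ 0 for all t (so the nondegeneracy condition ⟨δℱ/δu, 1⟩ ≠ 0 holds for all time along the solution). -/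
/-!
With `w = uₓ`, equality of mixed partials turns the equation into `wₜ = u + ½ u (u²)ₓₓ`, and then
`(w²)ₜ = 2 w (u + ½ u (u²)ₓₓ) = ∂ₓ (u² (1 + w²))` is the `x`-derivative of a `2π`-periodic
function. Differentiating under the integral sign, `d/dt ∫₀^{2π} w² dx = 0`, so the integral is
constant in time and the condition `∫₀^{2π} w² dx ≠ 2π` at `t = 0` persists for all `t`.
-/

open Real intervalIntegral Function Metric Set

section Slices

variable {E : Type*} [NormedAddCommGroup E] [NormedSpace ℝ E]
  {f : ℝ × ℝ → E} {f' : ℝ × ℝ →L[ℝ] E} {t x : ℝ}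

theorem HasFDerivAt.hasDerivAt_slice_left (h : HasFDerivAt f f' (t, x)) :
    HasDerivAt (fun s => f (s, x)) (f' (1, 0)) t :=
  h.comp_hasDerivAt t ((hasDerivAt_id t).prodMk (hasDerivAt_const t x))

theorem HasFDerivAt.hasDerivAt_slice_right (h : HasFDerivAt f f' (t, x)) :
    HasDerivAt (fun y => f (t, y)) (f' (0, 1)) x :=
  h.comp_hasDerivAt x ((hasDerivAt_const x t).prodMk (hasDerivAt_id x))

variable {u : ℝ → ℝ → E}

theorem deriv_curry_left_eq_fderiv (hu : DifferentiableAt ℝ (uncurry u) (t, x)) :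
    deriv (fun s => u s x) t = fderiv ℝ (uncurry u) (t, x) (1, 0) :=
  hu.hasFDerivAt.hasDerivAt_slice_left.deriv

theorem deriv_curry_right_eq_fderiv (hu : DifferentiableAt ℝ (uncurry u) (t, x)) :
    deriv (u t) x = fderiv ℝ (uncurry u) (t, x) (0, 1) :=
  hu.hasFDerivAt.hasDerivAt_slice_right.deriv

theorem ContDiff.uncurry_deriv_left {n : WithTop ℕ∞} (hu : ContDiff ℝ (n + 1) (uncurry u)) :
    ContDiff ℝ n (uncurry fun t x => deriv (fun s => u s x) t) := by
  have hpartial : (uncurry fun t x => deriv (fun s => u s x) t) =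
      fun p => fderiv ℝ (uncurry u) p (1, 0) :=
    funext fun _ => deriv_curry_left_eq_fderiv (hu.differentiable (by simp) _)
  rw [hpartial]
  exact (hu.fderiv_right le_rfl).clm_apply contDiff_const

theorem ContDiff.uncurry_deriv_right {n : WithTop ℕ∞} (hu : ContDiff ℝ (n + 1) (uncurry u)) :
    ContDiff ℝ n (uncurry fun t x => deriv (u t) x) := by
  have hpartial : (uncurry fun t x => deriv (u t) x) = fun p => fderiv ℝ (uncurry u) p (0, 1) :=
    funext fun _ => deriv_curry_right_eq_fderiv (hu.differentiable (by simp) _)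
  rw [hpartial]
  exact (hu.fderiv_right le_rfl).clm_apply contDiff_const

theorem deriv_deriv_curry_comm (hu : ContDiff ℝ 2 (uncurry u)) :
    deriv (fun s => deriv (u s) x) t = deriv (fun y => deriv (fun s => u s y) t) x := by
  set U' := fderiv ℝ (uncurry u)
  have hU' : Differentiable ℝ U' := (hu.fderiv_right (m := 1) le_rfl).differentiable one_ne_zero
  have hu₁ : Differentiable ℝ (uncurry u) := hu.differentiable (by norm_num)
  have hinner_x : (fun s => deriv (u s) x) = fun s => U' (s, x) (0, 1) :=
    funext fun s => deriv_curry_right_eq_fderiv (hu₁ _)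
  have hinner_t : (fun y => deriv (fun s => u s y) t) = fun y => U' (t, y) (1, 0) :=
    funext fun y => deriv_curry_left_eq_fderiv (hu₁ _)
  rw [hinner_x, hinner_t,
    (((hU' _).hasFDerivAt.hasDerivAt_slice_left).clm_apply (hasDerivAt_const t _)).deriv,
    (((hU' _).hasFDerivAt.hasDerivAt_slice_right).clm_apply (hasDerivAt_const x _)).deriv]
  simpa using hu.contDiffAt.isSymmSndFDerivAt (by simp) (1, 0) (0, 1)

end Slices

theorem hasDerivAt_intervalIntegral_of_continuous_deriv {E : Type*} [NormedAddCommGroup E]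
    [NormedSpace ℝ E] {F F' : ℝ → ℝ → E} {a b : ℝ} (t₀ : ℝ)
    (hF : ∀ t, Continuous (F t)) (hF' : Continuous (uncurry F'))
    (hderiv : ∀ t x, HasDerivAt (fun s => F s x) (F' t x) t) :
    HasDerivAt (fun t => ∫ x in a..b, F t x) (∫ x in a..b, F' t₀ x) t₀ := by
  obtain ⟨C, hC⟩ :=
    ((isCompact_closedBall t₀ 1).prod isCompact_uIcc).exists_bound_of_continuousOn hF'.continuousOn
  refine (hasDerivAt_integral_of_dominated_loc_of_deriv_le (bound := fun _ => C)
    (closedBall_mem_nhds t₀ one_pos) (.of_forall fun t => (hF t).aestronglyMeasurable)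
    ((hF t₀).intervalIntegrable a b)
    (hF'.comp (Continuous.prodMk_right t₀)).aestronglyMeasurable
    (.of_forall fun x hx t ht => hC (t, x) ⟨ht, uIoc_subset_uIcc hx⟩) intervalIntegrable_const
    (.of_forall fun x _ t _ => hderiv t x)).2

theorem Function.Periodic.deriv {f : ℝ → ℝ} {T : ℝ} (hf : Periodic f T) :
    Periodic (deriv f) T :=
  fun x => by rw [← deriv_comp_add_const, funext hf]

theorem Function.Periodic.intervalIntegral_deriv_eq_zero {E : Type*} [NormedAddCommGroup E]
    [NormedSpace ℝ E] [CompleteSpace E] {f : ℝ → E} {T : ℝ} (hf : Periodic f T)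
    (hf₁ : ContDiff ℝ 1 f) (a : ℝ) : ∫ x in a..a + T, _root_.deriv f x = 0 := by
  rw [integral_deriv_eq_sub (fun x _ => hf₁.differentiable one_ne_zero x)
    (hf₁.continuous_deriv_one.intervalIntegrable _ _), hf a, sub_self]

noncomputable def modifiedShortPulseRhs (v : ℝ → ℝ) (x : ℝ) : ℝ :=
  v x + 1 / 2 * v x * deriv (fun y => deriv (fun z => v z ^ 2) y) x

theorem hasDerivAt_sq_mul_one_add_deriv_sq {v : ℝ → ℝ} (hv : ContDiff ℝ 2 v) (x : ℝ) :
    HasDerivAt (fun y => v y ^ 2 * (1 + deriv v y ^ 2))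
      (2 * deriv v x * modifiedShortPulseRhs v x) x := by
  have hd : ∀ y, HasDerivAt v (deriv v y) y := fun y =>
    (hv.differentiable two_ne_zero y).hasDerivAt
  have hd' : HasDerivAt (deriv v) (deriv (deriv v) x) x :=
    ((hv.deriv' (n := 1)).differentiable one_ne_zero x).hasDerivAt
  have hsq : (fun y => deriv (fun z => v z ^ 2) y) = fun y => 2 * v y * deriv v y :=
    funext fun y => by rw [((hd y).fun_pow 2).deriv]; norm_num
  have hsq' : deriv (fun y => deriv (fun z => v z ^ 2) y) x =
      2 * deriv v x * deriv v x + 2 * v x * deriv (deriv v) x := by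
    rw [hsq]
    exact (((hd x).const_mul 2).mul hd').deriv
  rw [modifiedShortPulseRhs, hsq']
  exact ((hd x).fun_pow 2).fun_mul ((hd'.fun_pow 2).const_add 1) |>.congr_deriv (by push_cast; ring)

theorem integral_deriv_mul_modifiedShortPulseRhs_eq_zero {v : ℝ → ℝ} {T : ℝ}
    (hv : ContDiff ℝ 2 v) (hper : Periodic v T) :
    ∫ x in 0..T, 2 * deriv v x * modifiedShortPulseRhs v x = 0 := by
  have hflux_per : Periodic (fun y => v y ^ 2 * (1 + deriv v y ^ 2)) T := fun y => by
    simp only [hper y, hper.deriv y]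
  have hflux : ContDiff ℝ 1 (fun y => v y ^ 2 * (1 + deriv v y ^ 2)) :=
    ((hv.of_le one_le_two).pow 2).mul (contDiff_const.add ((hv.deriv' (n := 1)).pow 2))
  have h := hflux_per.intervalIntegral_deriv_eq_zero hflux 0
  rw [zero_add] at h
  exact (integral_congr fun x _ => (hasDerivAt_sq_mul_one_add_deriv_sq hv x).deriv.symm).trans h

theorem hasDerivAt_integral_deriv_sq_of_modifiedShortPulse {u : ℝ → ℝ → ℝ} {T : ℝ}
    (hu : ContDiff ℝ 2 (uncurry u)) (hper : ∀ t, Periodic (u t) T)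
    (hpde : ∀ t x, deriv (fun y => deriv (fun s => u s y) t) x = modifiedShortPulseRhs (u t) x)
    (t₀ : ℝ) : HasDerivAt (fun t => ∫ x in 0..T, deriv (u t) x ^ 2) 0 t₀ := by
  have hux : ContDiff ℝ 1 (uncurry fun t x => deriv (u t) x) := hu.uncurry_deriv_right
  have hutx : Continuous (uncurry fun t x => deriv (fun s => deriv (u s) x) t) :=
    (hux.uncurry_deriv_left (n := 0)).continuous
  have hF' : Continuous fun p : ℝ × ℝ =>
      2 * deriv (u p.1) p.2 * deriv (fun s => deriv (u s) p.2) p.1 :=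
    (continuous_const.mul hux.continuous).mul hutx
  have hleibniz := hasDerivAt_intervalIntegral_of_continuous_deriv (a := 0) (b := T) t₀
    (F := fun t x => deriv (u t) x ^ 2)
    (F' := fun t x => 2 * deriv (u t) x * deriv (fun s => deriv (u s) x) t)
    (fun t => (hux.continuous.comp (Continuous.prodMk_right t)).pow 2) hF' fun t x => by
      simpa using (hux.differentiable one_ne_zero (t, x)).hasFDerivAt.hasDerivAt_slice_left
        |>.differentiableAt.hasDerivAt.fun_pow 2
  have hzero : ∫ x in 0..T, 2 * deriv (u t₀) x * deriv (fun s => deriv (u s) x) t₀ = 0 := by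
    have hslice : ContDiff ℝ 2 (u t₀) := hu.comp (contDiff_const.prodMk contDiff_id)
    refine (integral_congr fun x _ => ?_).trans
      (integral_deriv_mul_modifiedShortPulseRhs_eq_zero hslice (hper t₀))
    simp only [deriv_deriv_curry_comm hu, hpde]
  rwa [hzero] at hleibniz

/-- For a classical `2π`-periodic-in-space solution `u` of the modified short pulse
equation `u_{tx} = u + (1/2)u(u²)_{xx}`, the quantity `∫₀^{2π} u_x² dx` is conserved;
consequently, if `∫₀^{2π} u_x(0,x)² dx ≠ 2π`, then the nondegeneracy condition
`2π − ∫₀^{2π} u_x(t,x)² dx ≠ 0` holds for all `t`. -/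
theorem modifiedShortPulse_conservation_and_nondegeneracy (u : ℝ → ℝ → ℝ)
    (hu : ContDiff ℝ 2 (Function.uncurry u))
    (hper : ∀ t x : ℝ, u t (x + 2 * π) = u t x)
    (hpde : ∀ t x : ℝ, deriv (fun y => deriv (fun s => u s y) t) x =
      u t x + (1 / 2) * u t x * deriv (fun y => deriv (fun z => (u t z) ^ 2) y) x) :
    (∀ t₁ t₂ : ℝ,
      (∫ x in (0:ℝ)..(2 * π), (deriv (u t₁) x) ^ 2) =
        ∫ x in (0:ℝ)..(2 * π), (deriv (u t₂) x) ^ 2) ∧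
    ((∫ x in (0:ℝ)..(2 * π), (deriv (u 0) x) ^ 2) ≠ 2 * π →
      ∀ t : ℝ, 2 * π - (∫ x in (0:ℝ)..(2 * π), (deriv (u t) x) ^ 2) ≠ 0) := by
  have henergy := hasDerivAt_integral_deriv_sq_of_modifiedShortPulse hu hper hpde
  have hconst : ∀ t₁ t₂ : ℝ, (∫ x in (0:ℝ)..(2 * π), (deriv (u t₁) x) ^ 2) =
      ∫ x in (0:ℝ)..(2 * π), (deriv (u t₂) x) ^ 2 :=
    is_const_of_deriv_eq_zero (fun t => (henergy t).differentiableAt) fun t => (henergy t).deriv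
  refine ⟨hconst, fun h0 t => ?_⟩
  rw [hconst t 0]
  exact sub_ne_zero_of_ne h0.symm
end
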